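/- arXiv:0910.4441 — 2 statements merged into one kernel-verified Lean document; each statement's English description precedes it below -/
import Mathlib

section
/- Let ν = (ν_1 ≥ … ≥ ν_r) be an ℝ-partition and let S ∈ M_r(𝓕) be of full rank. Then there exists a ν̂-admissible matrix T ∈ GL_r(R) such that for all index sets I ⊆ H ⊆ J of equal length k with 1 ≤ k ≤ r, the minors (ST)_{IJ} and (ST)_{IH} are nonzero and ‖(ST)_{IJ}‖ ≤ ‖(ST)_{IH}‖ ≤ ‖(ST)_{IJ}‖ + |ν̂_J| − |ν̂_H|, where ν̂ = (ν_r, ν_{r−1}, …, ν_1). -/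
open Matrix HahnSeries

noncomputable section

variable {K : Type*} [Field K] [CharZero K]

/-- Membership in the valuation ring `R = {a ∈ 𝓕 : a = 0 ∨ ‖a‖ ≥ 0}` of
`𝓕 = HahnSeries ℝ K`. -/
def inR (a : HahnSeries ℝ K) : Prop := a = 0 ∨ 0 ≤ a.order

/-- `M ∈ GL_r(R)`: all entries of `M` lie in `R` and `M` has a two-sided inverse with
entries in `R`. -/
def InGLR {r : ℕ} (M : Matrix (Fin r) (Fin r) (HahnSeries ℝ K)) : Prop :=
  (∀ i j, inR (M i j)) ∧
    ∃ N : Matrix (Fin r) (Fin r) (HahnSeries ℝ K),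
      (∀ i j, inR (N i j)) ∧ M * N = 1 ∧ N * M = 1

/-- The diagonal matrix `D_μ = diag(t^{μ_1}, …, t^{μ_r})`. -/
def Dmat (K : Type*) [Field K] {r : ℕ} (μ : Fin r → ℝ) :
    Matrix (Fin r) (Fin r) (HahnSeries ℝ K) :=
  Matrix.diagonal fun i => HahnSeries.single (μ i) 1

/-- `D_ν̂ = diag(t^{ν_r}, …, t^{ν_1})`. -/
def DmatHat (K : Type*) [Field K] {r : ℕ} (ν : Fin r → ℝ) :
    Matrix (Fin r) (Fin r) (HahnSeries ℝ K) :=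
  Dmat K fun i => ν i.rev

/-- `inv(M) = μ`: `μ` is weakly decreasing and `P M Q⁻¹ = D_μ` for some `P, Q ∈ GL_r(R)`. -/
def IsInv {r : ℕ} (M : Matrix (Fin r) (Fin r) (HahnSeries ℝ K)) (μ : Fin r → ℝ) : Prop :=
  Antitone μ ∧ ∃ P Q : Matrix (Fin r) (Fin r) (HahnSeries ℝ K),
    InGLR P ∧ InGLR Q ∧ P * M * Q⁻¹ = Dmat K μ

/-- `Q` is `μ`-admissible: `Q ∈ GL_r(R)` and `D_μ Q D_μ⁻¹ ∈ GL_r(R)`. -/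
def MuAdmissible {r : ℕ} (μ : Fin r → ℝ)
    (Q : Matrix (Fin r) (Fin r) (HahnSeries ℝ K)) : Prop :=
  InGLR Q ∧ InGLR (Dmat K μ * Q * (Dmat K μ)⁻¹)

/-- `T` is `ν̂`-admissible: `T ∈ GL_r(R)` and `D_ν̂⁻¹ T D_ν̂ ∈ GL_r(R)`. -/
def NuHatAdmissible {r : ℕ} (ν : Fin r → ℝ)
    (T : Matrix (Fin r) (Fin r) (HahnSeries ℝ K)) : Prop :=
  InGLR T ∧ InGLR ((DmatHat K ν)⁻¹ * T * DmatHat K ν)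

/-- The minor `W_{IJ}`: the determinant of the `k × k` submatrix of `W` on rows `I` and
columns `J`. -/
def minorDet {r k : ℕ} (W : Matrix (Fin r) (Fin r) (HahnSeries ℝ K))
    (I J : Fin k → Fin r) : HahnSeries ℝ K :=
  (W.submatrix I J).det

/-- Pair equivalence: `(A, B) = (P M Q⁻¹, Q N T⁻¹)` for some `P, Q, T ∈ GL_r(R)`. -/
def PairEquiv {r : ℕ} (M N A B : Matrix (Fin r) (Fin r) (HahnSeries ℝ K)) : Prop :=
  ∃ P Q T : Matrix (Fin r) (Fin r) (HahnSeries ℝ K),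
    InGLR P ∧ InGLR Q ∧ InGLR T ∧ A = P * M * Q⁻¹ ∧ B = Q * N * T⁻¹

/-- `N` is `μ`-generic: full rank, upper triangular, and for all index sets
`I ⊆ H ⊆ J` of equal length the minors `N_{IJ}, N_{HJ}, N_{IH}` are nonzero with
`‖N_{IJ}‖ ≤ ‖N_{HJ}‖ ≤ ‖N_{IJ}‖ + |μ_I| − |μ_H|` and `‖N_{IJ}‖ ≤ ‖N_{IH}‖`. -/
def MuGeneric {r : ℕ} (μ : Fin r → ℝ)
    (N : Matrix (Fin r) (Fin r) (HahnSeries ℝ K)) : Prop :=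
  N.det ≠ 0 ∧ (∀ i j : Fin r, j < i → N i j = 0) ∧
  ∀ (k : ℕ) (I H J : Fin k → Fin r), StrictMono I → StrictMono H → StrictMono J →
    (∀ s, I s ≤ H s) → (∀ s, H s ≤ J s) →
    minorDet N I J ≠ 0 ∧ minorDet N H J ≠ 0 ∧ minorDet N I H ≠ 0 ∧
    (minorDet N I J).order ≤ (minorDet N H J).order ∧
    (minorDet N H J).order ≤ (minorDet N I J).order + (∑ s, μ (I s)) - ∑ s, μ (H s) ∧
    (minorDet N I J).order ≤ (minorDet N I H).order

/-- `L` is `μ`-`ν̂`-generic: `L ∈ GL_r(R)`, lower triangular, and for all index sets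
`I ⊆ H ⊆ J` of equal length the relevant minors are nonzero with
`‖L_{IJ}‖ ≤ ‖L_{HJ}‖ ≤ ‖L_{IJ}‖ + |μ_I| − |μ_H|` and
`‖L_{IJ}‖ ≤ ‖L_{IH}‖ ≤ ‖L_{IJ}‖ + |ν̂_J| − |ν̂_H|`. -/
def MuNuGeneric {r : ℕ} (μ ν : Fin r → ℝ)
    (L : Matrix (Fin r) (Fin r) (HahnSeries ℝ K)) : Prop :=
  InGLR L ∧ (∀ i j : Fin r, i < j → L i j = 0) ∧
  ∀ (k : ℕ) (I H J : Fin k → Fin r), StrictMono I → StrictMono H → StrictMono J →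
    (∀ s, I s ≤ H s) → (∀ s, H s ≤ J s) →
    minorDet L I J ≠ 0 ∧ minorDet L H J ≠ 0 ∧ minorDet L I H ≠ 0 ∧
    (minorDet L I J).order ≤ (minorDet L H J).order ∧
    (minorDet L H J).order ≤ (minorDet L I J).order + (∑ s, μ (I s)) - (∑ s, μ (H s)) ∧
    (minorDet L I J).order ≤ (minorDet L I H).order ∧
    (minorDet L I H).order ≤
      (minorDet L I J).order + (∑ s, ν ((J s).rev)) - ∑ s, ν ((H s).rev)

/-- The rightmost `k` columns `(r−k+1, …, r)` of an `r × r` matrix, as a map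
`Fin k → Fin r`. -/
def lastCols (r k : ℕ) (h : k ≤ r) : Fin k → Fin r :=
  fun i => ⟨r - k + i.val, by have := i.isLt; omega⟩

/-- The set of (0-based) rows of an `r × r` matrix that remain after omitting the rows
with 1-based index in the interval `[p, q]`. -/
def keptRows (r p q : ℕ) : Finset (Fin r) :=
  (Finset.univ.filter fun x : Fin r => p ≤ x.val + 1 ∧ x.val + 1 ≤ q)ᶜ

lemma keptRows_card_le (r p q : ℕ) : (keptRows r p q).card ≤ r := by
  simpa using (keptRows r p q).card_le_univ

/-- `‖((p)^∧, …, (q)^∧)‖` for the matrix `N`: the order of the minor of `N` on the rows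
`{1, …, r} ∖ {p, …, q}` (1-based) and the rightmost columns; when `p > q` no row is
omitted and this is `‖det N‖`. -/
def hatOrd {r : ℕ} (N : Matrix (Fin r) (Fin r) (HahnSeries ℝ K)) (p q : ℕ) : ℝ :=
  (minorDet N (fun i => ((keptRows r p q).orderIsoOfFin rfl i).1)
    (lastCols r (keptRows r p q).card (keptRows_card_le r p q))).order

/-- `k` is the right filling of a pair `(M, N)` with `inv(M) = μ`: there is a
`μ`-generic matrix `N*` with `(D_μ, N*)` pair-equivalent to `(M, N)` such that `k`
satisfies the determinantal formula
`k_{1j} + ⋯ + k_{ij} = ‖((j−i)^∧, …, (j−1)^∧)‖ − ‖((j−i+1)^∧, …, (j)^∧)‖`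
(all indices written 1-based). -/
def RightFillingOf {r : ℕ} (μ : Fin r → ℝ)
    (M N : Matrix (Fin r) (Fin r) (HahnSeries ℝ K))
    (k : Fin r → Fin r → ℝ) : Prop :=
  ∃ Nstar : Matrix (Fin r) (Fin r) (HahnSeries ℝ K),
    MuGeneric μ Nstar ∧ PairEquiv M N (Dmat K μ) Nstar ∧
    ∀ i j : Fin r, i ≤ j →
      ∑ s ∈ Finset.Iic i, k s j =
        hatOrd Nstar (j.val - i.val) j.val - hatOrd Nstar (j.val - i.val + 1) (j.val + 1)

/-- The left filling of `(M, N)` is the right filling of the transposed pair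
`(Nᵀ, Mᵀ)`. -/
def LeftFillingOf {r : ℕ} (ν : Fin r → ℝ)
    (M N : Matrix (Fin r) (Fin r) (HahnSeries ℝ K))
    (m : Fin r → Fin r → ℝ) : Prop :=
  RightFillingOf ν Nᵀ Mᵀ m

/-- `{k_ij : 1 ≤ i ≤ j ≤ r}` (indexed 0-based here) is an `L𝕉` filling of type
`(μ, ν; λ)`: the conditions (LR1)–(LR4). -/
def IsLRFilling {r : ℕ} (μ ν lam : Fin r → ℝ) (k : Fin r → Fin r → ℝ) : Prop :=
  (∀ j : Fin r, μ j + ∑ s ∈ Finset.Iic j, k s j = lam j) ∧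
  (∀ i : Fin r, ∑ s ∈ Finset.Ici i, k i s = ν i) ∧
  (∀ i j : Fin r, i < j → 0 ≤ k i j) ∧
  (∀ (i j : ℕ) (hi : i < r) (hj : j < r), i ≤ j → 1 ≤ j →
    μ ⟨j, hj⟩ + ∑ s ∈ Finset.Iic (⟨i, hi⟩ : Fin r), k s ⟨j, hj⟩ ≤
      μ ⟨j - 1, by omega⟩ + ∑ s ∈ Finset.Iio (⟨i, hi⟩ : Fin r), k s ⟨j - 1, by omega⟩) ∧
  (∀ (i j : ℕ) (hij : i ≤ j) (hj : j + 1 < r),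
    ∑ s ∈ Finset.Icc (⟨i + 1, by omega⟩ : Fin r) ⟨j + 1, hj⟩, k ⟨i + 1, by omega⟩ s ≤
      ∑ s ∈ Finset.Icc (⟨i, by omega⟩ : Fin r) ⟨j, by omega⟩, k ⟨i, by omega⟩ s)


/-!
Take `T = (c_ij t^{(w_i - w_j)⁺})` with `w = ν̂`, which is increasing, and constants `c_ij ∈ K`.
By Cauchy–Binet, `(ST)_{IH} = ∑_g (∏_s c_{g_s H_s}) t^{∑_s (w_{g_s} - w_{H_s})⁺} S_{Ig}`, so its
order is at least `m(I, H) = min_g (‖S_{Ig}‖ + ∑_s (w_{g_s} - w_{H_s})⁺)`, and the coefficient of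
`t^{m(I, H)}` is a polynomial in the `c_ij` which is nonzero since distinct `g` contribute distinct
monomials. As `K` is infinite, one choice of `c` avoids the zeros of these finitely many
polynomials, and then `‖(ST)_{IH}‖ = m(I, H)` for all `I, H`. For `H ≤ J` the termwise inequalities
`(w_g - w_J)⁺ ≤ (w_g - w_H)⁺ ≤ (w_g - w_J)⁺ + w_J - w_H` give
`m(I, J) ≤ m(I, H) ≤ m(I, J) + |ν̂_J| - |ν̂_H|`.
The entries of `T` lie in `R`, `‖det T‖ = m(id, id) - ‖det S‖ = 0`, and `D_ν̂⁻¹ T D_ν̂` is the same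
construction for `-w`; so `T` is `ν̂`-admissible.
-/

namespace Matrix

variable {R : Type*} [CommRing R] {m n : Type*} [Fintype m] [DecidableEq m] [Fintype n]

theorem det_mul_eq_sum_prod_mul_det_submatrix (A : Matrix m n R) (B : Matrix n m R) :
    (A * B).det = ∑ g : m → n, (∏ s, B (g s) s) * (A.submatrix id g).det := by
  rw [← det_transpose, transpose_mul]
  have hrows : Bᵀ * Aᵀ = of fun s => ∑ c : n, B c s • Aᵀ c := by
    ext s j
    simp [mul_apply, Finset.sum_apply, mul_comm]
  rw [hrows]
  change (detRowAlternating : (m → R) [⋀^m]→ₗ[R] R).toMultilinearMap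
    (fun s => ∑ c : n, B c s • Aᵀ c) = _
  rw [MultilinearMap.map_sum]
  refine Finset.sum_congr rfl fun g _ => ?_
  rw [MultilinearMap.map_smul_univ, smul_eq_mul, ← det_transpose (A.submatrix id g)]
  rfl

theorem exists_det_submatrix_ne_zero [DecidableEq n] [Nontrivial R] {S : Matrix n n R}
    (hS : IsUnit S.det) {I : m → n} (hI : Function.Injective I) :
    ∃ g : m → n, (S.submatrix I g).det ≠ 0 := by
  have hone : (S.submatrix I id * S⁻¹.submatrix id I).det = 1 := by
    rw [← submatrix_mul _ _ _ _ _ Function.bijective_id, mul_nonsing_inv _ hS,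
      submatrix_one _ hI, det_one]
  by_contra! h
  simp [det_mul_eq_sum_prod_mul_det_submatrix, h] at hone

end Matrix

namespace MvPolynomial

variable {R σ : Type*} [CommRing R]

theorem exists_forall_eval_ne_zero [IsDomain R] [Infinite R] {ι : Type*} [Finite ι]
    (Q : ι → MvPolynomial σ R) : ∃ x : σ → R, ∀ i, Q i ≠ 0 → eval x (Q i) ≠ 0 := by
  classical
  have := Fintype.ofFinite ι
  have hprod : ∏ i ∈ Finset.univ.filter (Q · ≠ 0), Q i ≠ 0 :=
    Finset.prod_ne_zero_iff.mpr fun i hi => (Finset.mem_filter.mp hi).2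
  obtain ⟨x, hx⟩ : ∃ x, eval x (∏ i ∈ Finset.univ.filter (Q · ≠ 0), Q i) ≠ 0 := by
    by_contra! h
    exact hprod (funext fun x => by simp [h x])
  rw [map_prod, Finset.prod_ne_zero_iff] at hx
  exact ⟨x, fun i hi => hx i (by simp [hi])⟩

theorem sum_C_mul_prod_X_ne_zero {m n ι : Type*} [Fintype m] [DecidableEq m]
    {G : Finset (m → n)} (hG : G.Nonempty) {a : (m → n) → R} (ha : ∀ g ∈ G, a g ≠ 0)
    {H : m → ι} (hH : Function.Injective H) :
    ∑ g ∈ G, C (a g) * ∏ s, X (g s, H s) ≠ 0 := by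
  classical
  let d : (m → n) → (n × ι) →₀ ℕ := fun g => ∑ s, Finsupp.single (g s, H s) 1
  have hd : Function.Injective d := by
    intro g g' hgg'
    funext s
    have := DFunLike.congr_fun hgg' (g s, H s)
    simp only [d, Finsupp.finsetSum_apply, Finsupp.single_apply, Prod.mk.injEq, hH.eq_iff,
      and_comm, ite_and, Finset.sum_ite_eq', Finset.mem_univ, if_true] at this
    by_contra hne
    rw [if_neg (Ne.symm hne)] at this
    exact one_ne_zero this
  have hmon : ∀ g, C (a g) * ∏ s, X (g s, H s) = monomial (d g) (a g) := by
    intro g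
    simp only [X, d, ← monomial_sum_one, C_mul_monomial, mul_one]
  obtain ⟨g₀, hg₀⟩ := hG
  intro h
  have := congrArg (coeff (d g₀)) h
  simp only [hmon, coeff_sum, coeff_monomial, hd.eq_iff, Finset.sum_ite_eq', if_pos hg₀,
    coeff_zero] at this
  exact ha g₀ hg₀ this

end MvPolynomial

namespace HahnSeries

variable {F : Type*} [Field F]

theorem prod_single {ι : Type*} (s : Finset ι) (a : ι → ℝ) (b : ι → F) :
    ∏ i ∈ s, single (a i) (b i) = single (∑ i ∈ s, a i) (∏ i ∈ s, b i) := by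
  classical
  induction s using Finset.induction_on with
  | empty => simp
  | insert _ _ h ih => rw [Finset.prod_insert h, Finset.sum_insert h, Finset.prod_insert h, ih,
      single_mul_single]

theorem order_eq_of_coeff_ne_zero {x : HahnSeries ℝ F} {a : ℝ} (ha : x.coeff a ≠ 0)
    (hlt : ∀ b < a, x.coeff b = 0) : x.order = a :=
  le_antisymm (order_le_of_coeff_ne_zero ha)
    ((le_order_iff_forall (ne_zero_of_coeff_ne_zero ha)).mpr hlt)

end HahnSeries

section GenericFactor

open MvPolynomial

variable {F : Type*} [Field F] {m n : Type*} [Fintype m] [DecidableEq m]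

def genericFactor (w : n → ℝ) (c : n × n → F) : Matrix n n (HahnSeries ℝ F) :=
  of fun i j => single (w i - w j)⁺ (c (i, j))

-- The order of the `g`-th term of the Cauchy–Binet expansion of
-- `det (A * (genericFactor w c).submatrix id H)` when the `c (g s, H s)` are nonzero.
def termOrder (w : n → ℝ) (A : Matrix m n (HahnSeries ℝ F)) (H g : m → n) : ℝ :=
  (A.submatrix id g).det.order + ∑ s, (w (g s) - w (H s))⁺

def minTermOrder (w : n → ℝ) (A : Matrix m n (HahnSeries ℝ F)) (H : m → n) : ℝ :=
  ⨅ g : {g : m → n // (A.submatrix id g).det ≠ 0}, termOrder w A H g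

variable {w : n → ℝ} {A : Matrix m n (HahnSeries ℝ F)} {H : m → n}

theorem coeff_sub_eq_zero_of_lt_termOrder {g : m → n} {x : ℝ} (hx : x < termOrder w A H g) :
    (A.submatrix id g).det.coeff (x - ∑ s, (w (g s) - w (H s))⁺) = 0 :=
  coeff_eq_zero_of_lt_order (by rw [termOrder] at hx; linarith)

variable [Fintype n]

-- The coefficient of `t ^ minTermOrder w A H` in that determinant, as a polynomial in `c`.
open scoped Classical in
def leadingPoly (w : n → ℝ) (A : Matrix m n (HahnSeries ℝ F)) (H : m → n) :
    MvPolynomial (n × n) F :=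
  ∑ g ∈ Finset.univ.filter fun g =>
      (A.submatrix id g).det ≠ 0 ∧ termOrder w A H g = minTermOrder w A H,
    C (A.submatrix id g).det.leadingCoeff * ∏ s, X (g s, H s)

theorem minTermOrder_le {g : m → n} (hg : (A.submatrix id g).det ≠ 0) :
    minTermOrder w A H ≤ termOrder w A H g :=
  ciInf_le (f := fun g : {g : m → n // (A.submatrix id g).det ≠ 0} => termOrder w A H g)
    (Set.finite_range _).bddBelow ⟨g, hg⟩

theorem exists_termOrder_eq_minTermOrder (hA : ∃ g : m → n, (A.submatrix id g).det ≠ 0) :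
    ∃ g, (A.submatrix id g).det ≠ 0 ∧ termOrder w A H g = minTermOrder w A H := by
  obtain ⟨g, hg⟩ := hA
  have : Nonempty {g : m → n // (A.submatrix id g).det ≠ 0} := ⟨⟨g, hg⟩⟩
  obtain ⟨⟨g, hg⟩, h⟩ := exists_eq_ciInf_of_finite
    (f := fun g : {g : m → n // (A.submatrix id g).det ≠ 0} => termOrder w A H g)
  exact ⟨g, hg, h⟩

theorem leadingPoly_ne_zero (hA : ∃ g : m → n, (A.submatrix id g).det ≠ 0)
    (hH : Function.Injective H) : leadingPoly w A H ≠ 0 := by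
  classical
  obtain ⟨g, hg, hmin⟩ := exists_termOrder_eq_minTermOrder (w := w) (H := H) hA
  refine sum_C_mul_prod_X_ne_zero ⟨g, by simp [hg, hmin]⟩ (fun g hg => ?_) hH
  exact leadingCoeff_ne_zero.mpr (Finset.mem_filter.mp hg).2.1

theorem coeff_det_mul_genericFactor (c : n × n → F) (x : ℝ) :
    (A * (genericFactor w c).submatrix id H).det.coeff x =
      ∑ g : m → n, (∏ s, c (g s, H s)) *
        (A.submatrix id g).det.coeff (x - ∑ s, (w (g s) - w (H s))⁺) := by
  simp only [Matrix.det_mul_eq_sum_prod_mul_det_submatrix, HahnSeries.coeff_sum,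
    submatrix_apply, id, genericFactor, of_apply, prod_single, coeff_single_mul]

theorem det_mul_genericFactor {c : n × n → F} (hc : eval c (leadingPoly w A H) ≠ 0) :
    (A * (genericFactor w c).submatrix id H).det ≠ 0 ∧
      (A * (genericFactor w c).submatrix id H).det.order = minTermOrder w A H := by
  classical
  have hA : ∃ g : m → n, (A.submatrix id g).det ≠ 0 := by
    by_contra! h
    simp [leadingPoly, h] at hc
  set μ := minTermOrder w A H
  have hlt : ∀ x < μ, (A * (genericFactor w c).submatrix id H).det.coeff x = 0 := by
    intro x hx
    rw [coeff_det_mul_genericFactor]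
    refine Finset.sum_eq_zero fun g _ => ?_
    by_cases hg : (A.submatrix id g).det = 0
    · simp [hg]
    · rw [coeff_sub_eq_zero_of_lt_termOrder (hx.trans_le (minTermOrder_le hg)), mul_zero]
  have hμ :
      (A * (genericFactor w c).submatrix id H).det.coeff μ = eval c (leadingPoly w A H) := by
    rw [coeff_det_mul_genericFactor, leadingPoly, Finset.sum_filter, map_sum]
    refine Finset.sum_congr rfl fun g _ => ?_
    split_ifs with hg
    · rw [show μ = termOrder w A H g from hg.2.symm, termOrder, add_sub_cancel_right,
        ← leadingCoeff_eq]
      simp [mul_comm]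
    · by_cases h0 : (A.submatrix id g).det = 0
      · simp [h0]
      · have hμg : μ < termOrder w A H g :=
          lt_of_le_of_ne (minTermOrder_le h0) fun h => hg ⟨h0, h.symm⟩
        rw [coeff_sub_eq_zero_of_lt_termOrder hμg, mul_zero, map_zero]
  rw [← hμ] at hc
  exact ⟨ne_zero_of_coeff_ne_zero hc, order_eq_of_coeff_ne_zero hc hlt⟩

theorem order_det_submatrix_id_of_ne_zero [DecidableEq n] {S : Matrix n n (HahnSeries ℝ F)}
    {g : n → n} (hg : (S.submatrix id g).det ≠ 0) : (S.submatrix id g).det.order = S.det.order := by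
  have hinj : Function.Injective g := fun a b hab => by
    by_contra hne
    exact hg (det_zero_of_column_eq hne fun i => by simp [hab])
  let σ := Equiv.ofBijective g (Finite.injective_iff_bijective.mp hinj)
  change (S.submatrix id σ).det.order = _
  rcases Int.units_eq_one_or (Equiv.Perm.sign σ) with h | h <;> simp [det_permute', h, order_neg]

theorem minTermOrder_id [DecidableEq n] {S : Matrix n n (HahnSeries ℝ F)} (hS : S.det ≠ 0) :
    minTermOrder w S id = S.det.order := by
  have hid : (S.submatrix id id).det ≠ 0 := by rwa [submatrix_id_id]
  refine le_antisymm ?_ ?_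
  · simpa [termOrder] using minTermOrder_le (w := w) (H := id) hid
  · obtain ⟨g, hg, hmin⟩ := exists_termOrder_eq_minTermOrder (w := w) (H := id) ⟨id, hid⟩
    rw [← hmin, termOrder, order_det_submatrix_id_of_ne_zero hg]
    linarith [Finset.sum_nonneg fun s (_ : s ∈ Finset.univ) => posPart_nonneg (w (g s) - w (id s))]

theorem det_genericFactor [DecidableEq n] {S : Matrix n n (HahnSeries ℝ F)} (hS : S.det ≠ 0)
    {c : n × n → F} (hc : eval c (leadingPoly w S id) ≠ 0) :
    (genericFactor w c).det ≠ 0 ∧ (genericFactor w c).det.order = 0 := by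
  obtain ⟨hne, hord⟩ := det_mul_genericFactor hc
  rw [submatrix_id_id, det_mul] at hne hord
  rw [minTermOrder_id hS, order_mul hS (right_ne_zero_of_mul hne)] at hord
  exact ⟨right_ne_zero_of_mul hne, by linarith⟩

end GenericFactor

section Monotone

variable {F : Type*} [Field F] {m n : Type*} [Fintype m] [DecidableEq m] [Preorder n]
  {w : n → ℝ} {A : Matrix m n (HahnSeries ℝ F)} {H J : m → n}

theorem termOrder_anti (hw : Monotone w) (hHJ : ∀ s, H s ≤ J s) (g : m → n) :
    termOrder w A J g ≤ termOrder w A H g := by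
  rw [termOrder, termOrder]
  gcongr with s
  exact posPart_mono (sub_le_sub_left (hw (hHJ s)) _)

theorem termOrder_le_add (hw : Monotone w) (hHJ : ∀ s, H s ≤ J s) (g : m → n) :
    termOrder w A H g ≤ termOrder w A J g + (∑ s, w (J s) - ∑ s, w (H s)) := by
  have key : ∀ s, (w (g s) - w (H s))⁺ ≤ (w (g s) - w (J s))⁺ + (w (J s) - w (H s)) := by
    intro s
    rw [posPart_def]
    exact sup_le (by linarith [le_posPart (w (g s) - w (J s))])
      (by linarith [posPart_nonneg (w (g s) - w (J s)), hw (hHJ s)])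
  have := Finset.sum_le_sum fun s (_ : s ∈ Finset.univ) => key s
  rw [Finset.sum_add_distrib, Finset.sum_sub_distrib] at this
  rw [termOrder, termOrder]
  linarith

variable [Fintype n]

theorem minTermOrder_anti (hw : Monotone w) (hA : ∃ g : m → n, (A.submatrix id g).det ≠ 0)
    (hHJ : ∀ s, H s ≤ J s) : minTermOrder w A J ≤ minTermOrder w A H := by
  obtain ⟨g, hg, hmin⟩ := exists_termOrder_eq_minTermOrder (w := w) (H := H) hA
  exact (minTermOrder_le hg).trans (hmin ▸ termOrder_anti hw hHJ g)

theorem minTermOrder_le_add (hw : Monotone w) (hA : ∃ g : m → n, (A.submatrix id g).det ≠ 0)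
    (hHJ : ∀ s, H s ≤ J s) :
    minTermOrder w A H ≤ minTermOrder w A J + (∑ s, w (J s) - ∑ s, w (H s)) := by
  obtain ⟨g, hg, hmin⟩ := exists_termOrder_eq_minTermOrder (w := w) (H := J) hA
  exact (minTermOrder_le hg).trans (hmin ▸ termOrder_le_add hw hHJ g)

end Monotone

open MvPolynomial in
theorem exists_eval_leadingPoly_ne_zero {F : Type*} [Field F] [Infinite F] {r : ℕ}
    (w : Fin r → ℝ) (S : Matrix (Fin r) (Fin r) (HahnSeries ℝ F)) :
    ∃ c : Fin r × Fin r → F, ∀ k ≤ r, ∀ I H : Fin k → Fin r,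
      leadingPoly w (S.submatrix I id) H ≠ 0 →
        eval c (leadingPoly w (S.submatrix I id) H) ≠ 0 := by
  obtain ⟨c, hc⟩ := exists_forall_eval_ne_zero
    fun t : Σ k : Fin (r + 1), (Fin k → Fin r) × (Fin k → Fin r) =>
      leadingPoly w (S.submatrix t.2.1 id) t.2.2
  exact ⟨c, fun k hk I H => hc ⟨⟨k, by omega⟩, I, H⟩⟩

section Admissible

variable {F : Type*} [Field F] {r : ℕ}

theorem Dmat_neg_mul_Dmat (μ : Fin r → ℝ) : Dmat F (-μ) * Dmat F μ = 1 := by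
  simp [Dmat, diagonal_mul_diagonal, single_mul_single, single_zero_one, diagonal_one]

theorem inv_Dmat (μ : Fin r → ℝ) : (Dmat F μ)⁻¹ = Dmat F (-μ) :=
  inv_eq_left_inv (Dmat_neg_mul_Dmat μ)

theorem Dmat_neg_mul_genericFactor_mul_Dmat (w : Fin r → ℝ) (c : Fin r × Fin r → F) :
    Dmat F (-w) * genericFactor w c * Dmat F w = genericFactor (-w) c := by
  ext i j
  simp only [Dmat, diagonal_mul, mul_diagonal, genericFactor, of_apply, single_mul_single,
    one_mul, mul_one, Pi.neg_apply]
  rw [show -w i + (w i - w j)⁺ + w j = (-w i - -w j)⁺ by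
    rw [show -w i - -w j = -(w i - w j) by ring, posPart_neg]
    linarith [posPart_sub_negPart (w i - w j)]]

theorem det_genericFactor_neg (w : Fin r → ℝ) (c : Fin r × Fin r → F) :
    (genericFactor (-w) c).det = (genericFactor w c).det := by
  rw [← Dmat_neg_mul_genericFactor_mul_Dmat, det_mul, det_mul, mul_right_comm, ← det_mul,
    Dmat_neg_mul_Dmat, det_one, one_mul]

theorem inR_iff (a : HahnSeries ℝ F) : inR a ↔ 0 ≤ a.order :=
  ⟨by rintro (rfl | h) <;> simp [*], Or.inr⟩

variable (F) in
def inRSubring : Subring (HahnSeries ℝ F) where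
  carrier := {a | inR a}
  zero_mem' := Or.inl rfl
  one_mem' := by simp [inR_iff]
  add_mem' {a b} ha hb := by
    rw [Set.mem_ofPred_eq, inR_iff] at *
    by_cases h : a + b = 0
    · simp [h]
    · exact (le_min ha hb).trans (min_order_le_order_add h)
  neg_mem' {a} ha := by simpa [inR_iff, order_neg] using ha
  mul_mem' {a b} ha hb := by
    rw [Set.mem_ofPred_eq, inR_iff] at *
    by_cases ha0 : a = 0
    · simp [ha0]
    by_cases hb0 : b = 0
    · simp [hb0]
    rw [order_mul ha0 hb0]
    exact add_nonneg ha hb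

theorem inGLR_of_order_det_eq_zero {M : Matrix (Fin r) (Fin r) (HahnSeries ℝ F)}
    (hM : ∀ i j, inR (M i j)) (hdet : M.det ≠ 0) (hord : M.det.order = 0) : InGLR M := by
  have hu : IsUnit M.det := isUnit_iff_ne_zero.mpr hdet
  refine ⟨hM, M⁻¹, fun i j => ?_, mul_nonsing_inv M hu, nonsing_inv_mul M hu⟩
  let M₀ : Matrix (Fin r) (Fin r) (inRSubring F) := of fun i j => ⟨M i j, hM i j⟩
  have hadj : M.adjugate = (inRSubring F).subtype.mapMatrix M₀.adjugate := by
    rw [RingHom.map_adjugate]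
    rfl
  have hinv : inR M.det⁻¹ := by
    rw [inR_iff]
    have := order_mul hdet (inv_ne_zero hdet)
    rw [mul_inv_cancel₀ hdet, order_one, hord] at this
    linarith
  rw [Matrix.inv_def, Matrix.smul_apply, Ring.inverse_eq_inv', smul_eq_mul, hadj]
  exact (inRSubring F).mul_mem hinv (M₀.adjugate i j).2

theorem inGLR_genericFactor (w : Fin r → ℝ) {c : Fin r × Fin r → F}
    (hdet : (genericFactor w c).det ≠ 0) (hord : (genericFactor w c).det.order = 0) :
    InGLR (genericFactor w c) := by
  refine inGLR_of_order_det_eq_zero (fun i j => ?_) hdet hord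
  rw [inR_iff]
  by_cases h : c (i, j) = 0 <;> simp [genericFactor, h, posPart_nonneg]

theorem nuHatAdmissible_genericFactor (ν : Fin r → ℝ) {c : Fin r × Fin r → F}
    (hdet : (genericFactor (fun i => ν i.rev) c).det ≠ 0)
    (hord : (genericFactor (fun i => ν i.rev) c).det.order = 0) :
    NuHatAdmissible ν (genericFactor (fun i => ν i.rev) c) := by
  refine ⟨inGLR_genericFactor _ hdet hord, ?_⟩
  rw [DmatHat, inv_Dmat, Dmat_neg_mul_genericFactor_mul_Dmat]
  rw [← det_genericFactor_neg] at hdet hord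
  exact inGLR_genericFactor _ hdet hord

end Admissible

/-- Existence of a generic `ν̂`-admissible right factor `T`: for all
index sets `I ⊆ H ⊆ J` of equal length `k`, `1 ≤ k ≤ r`, the minors `(ST)_{IJ}, (ST)_{IH}`
are nonzero and `‖(ST)_{IJ}‖ ≤ ‖(ST)_{IH}‖ ≤ ‖(ST)_{IJ}‖ + |ν̂_J| − |ν̂_H|`. -/
theorem generic_column_factor {r : ℕ} (ν : Fin r → ℝ) (hν : Antitone ν)
    (S : Matrix (Fin r) (Fin r) (HahnSeries ℝ K)) (hS : S.det ≠ 0) :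
    ∃ T : Matrix (Fin r) (Fin r) (HahnSeries ℝ K), NuHatAdmissible ν T ∧
      ∀ (k : ℕ), 1 ≤ k → k ≤ r → ∀ (I H J : Fin k → Fin r),
        StrictMono I → StrictMono H → StrictMono J →
        (∀ s, I s ≤ H s) → (∀ s, H s ≤ J s) →
        minorDet (S * T) I J ≠ 0 ∧ minorDet (S * T) I H ≠ 0 ∧
        (minorDet (S * T) I J).order ≤ (minorDet (S * T) I H).order ∧
        (minorDet (S * T) I H).order ≤
          (minorDet (S * T) I J).order + (∑ s, ν ((J s).rev)) - ∑ s, ν ((H s).rev) := by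
  set w : Fin r → ℝ := fun i => ν i.rev
  have hw : Monotone w := fun i j hij => hν (Fin.rev_le_rev.mpr hij)
  obtain ⟨c, hc⟩ := exists_eval_leadingPoly_ne_zero w S
  have hT := det_genericFactor hS (hc r le_rfl id id
    (leadingPoly_ne_zero ⟨id, by simpa using hS⟩ Function.injective_id))
  refine ⟨genericFactor w c, nuHatAdmissible_genericFactor ν hT.1 hT.2,
    fun k _ hkr I H J hI hH hJ _ hHJ => ?_⟩
  have hA : ∃ g, ((S.submatrix I id).submatrix id g).det ≠ 0 :=
    exists_det_submatrix_ne_zero (isUnit_iff_ne_zero.mpr hS) hI.injective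
  have hminor : ∀ H', minorDet (S * genericFactor w c) I H' =
      (S.submatrix I id * (genericFactor w c).submatrix id H').det := fun H' => by
    rw [minorDet, submatrix_mul _ _ _ _ _ Function.bijective_id]
  obtain ⟨hH0, hHord⟩ :=
    det_mul_genericFactor (hc k hkr I H (leadingPoly_ne_zero hA hH.injective))
  obtain ⟨hJ0, hJord⟩ :=
    det_mul_genericFactor (hc k hkr I J (leadingPoly_ne_zero hA hJ.injective))
  simp only [hminor, hHord, hJord]
  refine ⟨hJ0, hH0, minTermOrder_anti hw hA hHJ, ?_⟩
  linarith [minTermOrder_le_add hw hA hHJ (A := S.submatrix I id)]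
end
end

section
/- Suppose N* ∈ M_r(𝓕) is a μ-generic matrix with invariant partition inv(N*) = ν = (ν_1 ≥ ν_2 ≥ … ≥ ν_r), and let λ = (λ_1, …, λ_r) = inv(D_μ N*). Then for every 1 ≤ s ≤ r, writing I_s = (1, 2, …, s) and H_{r−s} = (r−s+1, r−s+2, …, r), one has ‖N*_{I_s H_{r−s}}‖ = ν_{r−s+1} + ν_{r−s+2} + … + ν_r and ‖(D_μ N*)_{H_{r−s} H_{r−s}}‖ = λ_{r−s+1} + λ_{r−s+2} + … + λ_r. -/
/-!
Multiplying by matrices over `R` on either side can only raise the least order of an `s × s`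
minor (Cauchy–Binet), so this least order is an invariant of `GL_r(R) M GL_r(R)`; for
`inv M = ν` it is the value for `D_ν`, namely `ν_{r-s+1} + ⋯ + ν_r`. It remains to see that the
two corner minors have least order. A nonzero minor `N*_{CD}` of the upper-triangular `N*` has
`I_s ≤ C ≤ D ≤ H_{r-s}`, and the genericity inequalities give
`‖N*_{I_s H}‖ ≤ ‖N*_{I_s D}‖ ≤ ‖N*_{CD}‖` and
`|μ_H| + ‖N*_{HH}‖ ≤ |μ_D| + ‖N*_{DH}‖ ≤ |μ_C| + ‖N*_{CH}‖ ≤ |μ_C| + ‖N*_{CD}‖`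
for `H = H_{r-s}`, while `‖(D_μ N*)_{CD}‖ = |μ_C| + ‖N*_{CD}‖`.
-/

open Matrix HahnSeries

noncomputable section

variable {K : Type*} [Field K] [CharZero K]

namespace Matrix

variable {R : Type*} [CommRing R]

theorem det_mul_eq_sum_prod_mul_det_submatrix_s7 {ι n : Type*} [Fintype ι] [DecidableEq ι]
    [Fintype n] (X : Matrix ι n R) (Y : Matrix n ι R) :
    (X * Y).det = ∑ g : ι → n, (∏ i, X i (g i)) * (Y.submatrix g id).det := by
  have hrows : X * Y = Matrix.of fun i => ∑ c, X i c • Y c := by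
    ext i j
    simp [Matrix.mul_apply]
  rw [hrows]
  change (detRowAlternating : (ι → R) [⋀^ι]→ₗ[R] R).toMultilinearMap
    (fun i => ∑ c, X i c • Y c) = _
  rw [MultilinearMap.map_sum]
  refine Finset.sum_congr rfl fun g _ => ?_
  rw [MultilinearMap.map_smul_univ, smul_eq_mul]
  rfl

theorem injective_of_det_submatrix_ne_zero {ι n : Type*} [Fintype ι] [DecidableEq ι]
    {A : Matrix n n R} {C D : ι → n} (h : (A.submatrix C D).det ≠ 0) :
    Function.Injective C ∧ Function.Injective D := by
  refine ⟨fun a b hab => ?_, fun a b hab => ?_⟩ <;> by_contra hne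
  · exact h (det_zero_of_row_eq hne (by ext j; simp [hab]))
  · exact h (det_zero_of_column_eq hne fun k => by simp [hab])

theorem BlockTriangular.le_of_det_submatrix_ne_zero {s : ℕ} {n : Type*} [LinearOrder n]
    {N : Matrix n n R} (hN : N.BlockTriangular id) {C D : Fin s → n} (hC : Monotone C)
    (hD : Monotone D) (h : (N.submatrix C D).det ≠ 0) (k : Fin s) : C k ≤ D k := by
  by_contra! hk
  refine h ?_
  rw [det_apply']
  refine Finset.sum_eq_zero fun σ _ => ?_
  -- `σ` cannot map the `k + 1` indices `≤ k` into the `k` indices `< k`.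
  obtain ⟨x, hxk, hkσx⟩ : ∃ x ∈ Finset.Iic k, k ≤ σ x := by
    by_contra! hlt
    have := Finset.card_le_card_of_injOn σ (fun x hx => Finset.mem_Iio.2 (hlt x hx))
      σ.injective.injOn
    simp at this
  have hzero : N (C (σ x)) (D x) = 0 :=
    hN ((hD (Finset.mem_Iic.1 hxk)).trans_lt (hk.trans_le (hC hkσx)))
  rw [Finset.prod_eq_zero (Finset.mem_univ x) (by simpa using hzero), mul_zero]

end Matrix

theorem Tuple.strictMono_sort {α : Type*} [LinearOrder α] {s : ℕ} {f : Fin s → α}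
    (hf : Function.Injective f) : StrictMono (f ∘ Tuple.sort f) :=
  (Tuple.monotone_sort f).strictMono_of_injective (hf.comp (Tuple.sort f).injective)

namespace AddValuation

variable {R Γ₀ : Type*} [CommRing R] [LinearOrderedAddCommMonoidWithTop Γ₀]
  (v : AddValuation R Γ₀)

theorem map_prod {ι : Type*} (s : Finset ι) (f : ι → R) :
    v (∏ i ∈ s, f i) = ∑ i ∈ s, v (f i) := by
  classical
  induction s using Finset.induction_on with
  | empty => simp
  | insert a s ha ih => rw [Finset.prod_insert ha, Finset.sum_insert ha, map_mul, ih]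

theorem map_intCast_units_mul (u : ℤˣ) (x : R) : v (((u : ℤ) : R) * x) = v x := by
  rcases Int.units_eq_one_or u with rfl | rfl
  · simp
  · simp [map_neg]

variable {ι n : Type*} [Fintype ι] [DecidableEq ι]

theorem nonneg_map_det {A : Matrix ι ι R} (hA : ∀ i j, 0 ≤ v (A i j)) : 0 ≤ v A.det := by
  rw [Matrix.det_apply']
  refine v.map_le_sum fun σ _ => ?_
  rw [map_intCast_units_mul, map_prod]
  exact Finset.sum_nonneg fun i _ => hA _ _

theorem map_det_submatrix_comp_perm (A : Matrix n n R) (C D : ι → n)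
    (σ τ : Equiv.Perm ι) :
    v (A.submatrix (C ∘ σ) (D ∘ τ)).det = v (A.submatrix C D).det := by
  have : A.submatrix (C ∘ σ) (D ∘ τ) = ((A.submatrix C D).submatrix σ id).submatrix id τ := rfl
  rw [this, Matrix.det_permute', Matrix.det_permute, map_intCast_units_mul,
    map_intCast_units_mul]

theorem exists_strictMono_map_det_submatrix_eq {s : ℕ} [LinearOrder n] {A : Matrix n n R}
    {C D : Fin s → n} (h : (A.submatrix C D).det ≠ 0) :
    ∃ C' D' : Fin s → n, StrictMono C' ∧ StrictMono D' ∧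
      v (A.submatrix C' D').det = v (A.submatrix C D).det := by
  obtain ⟨hC, hD⟩ := Matrix.injective_of_det_submatrix_ne_zero h
  exact ⟨C ∘ Tuple.sort C, D ∘ Tuple.sort D, Tuple.strictMono_sort hC, Tuple.strictMono_sort hD,
    v.map_det_submatrix_comp_perm A C D _ _⟩

variable [Fintype n] {m p : Type*}

theorem le_map_det_submatrix_mul_left {P : Matrix m n R} {X : Matrix n p R}
    (hP : ∀ i j, 0 ≤ v (P i j)) {c : Γ₀} (hX : ∀ g h, c ≤ v (X.submatrix g h : Matrix ι ι R).det)
    (g : ι → m) (h : ι → p) : c ≤ v ((P * X).submatrix g h).det := by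
  rw [Matrix.submatrix_mul _ _ _ id _ Function.bijective_id,
    Matrix.det_mul_eq_sum_prod_mul_det_submatrix_s7]
  refine v.map_le_sum fun g' _ => ?_
  rw [map_mul, map_prod]
  exact le_add_of_nonneg_of_le (Finset.sum_nonneg fun i _ => hP _ _) (hX g' h)

theorem le_map_det_submatrix_mul_right {X : Matrix m n R} {Q : Matrix n p R}
    (hQ : ∀ i j, 0 ≤ v (Q i j)) {c : Γ₀} (hX : ∀ g h, c ≤ v (X.submatrix g h : Matrix ι ι R).det)
    (g : ι → m) (h : ι → p) : c ≤ v ((X * Q).submatrix g h).det := by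
  rw [← Matrix.det_transpose, Matrix.transpose_submatrix, Matrix.transpose_mul]
  refine v.le_map_det_submatrix_mul_left (fun i j => hQ j i) (fun g' h' => ?_) h g
  rw [← Matrix.transpose_submatrix, Matrix.det_transpose]
  exact hX h' g'

theorem le_map_det_submatrix_mul_mul {P X Q : Matrix n n R} (hP : ∀ i j, 0 ≤ v (P i j))
    (hQ : ∀ i j, 0 ≤ v (Q i j)) {c : Γ₀}
    (hX : ∀ g h, c ≤ v (X.submatrix g h : Matrix ι ι R).det) (g h : ι → n) :
    c ≤ v ((P * X * Q).submatrix g h).det :=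
  v.le_map_det_submatrix_mul_right hQ (v.le_map_det_submatrix_mul_left hP hX) g h

theorem exists_map_det_submatrix_le_of_mul_mul {P X Q : Matrix n n R}
    (hP : ∀ i j, 0 ≤ v (P i j)) (hQ : ∀ i j, 0 ≤ v (Q i j)) (g h : ι → n) :
    ∃ C D : ι → n, v (X.submatrix C D).det ≤ v ((P * X * Q).submatrix g h).det := by
  have : Nonempty ((ι → n) × (ι → n)) := ⟨(g, h)⟩
  obtain ⟨⟨C, D⟩, hmin⟩ :=
    Finite.exists_min fun CD : (ι → n) × (ι → n) => v (X.submatrix CD.1 CD.2).det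
  exact ⟨C, D, v.le_map_det_submatrix_mul_mul hP hQ (fun g' h' => hmin (g', h')) g h⟩

end AddValuation

section Fin

variable {r s : ℕ} (hsr : s ≤ r) {f : Fin s → Fin r}

theorem lastCols_strictMono : StrictMono (lastCols r s hsr) :=
  fun i j hij => by simp only [lastCols, Fin.mk_lt_mk]; omega

theorem castLE_le_of_strictMono (hf : StrictMono f) (i : Fin s) : Fin.castLE hsr i ≤ f i := by
  have := Finset.card_le_card_of_injOn (s := Finset.Iic i) (t := Finset.Iic (f i)) f
    (fun x hx => Finset.mem_Iic.2 (hf.monotone (Finset.mem_Iic.1 hx))) hf.injective.injOn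
  simp only [Fin.card_Iic] at this
  simp only [Fin.le_def, Fin.val_castLE]
  omega

theorem le_lastCols_of_strictMono (hf : StrictMono f) (i : Fin s) : f i ≤ lastCols r s hsr i := by
  have := Finset.card_le_card_of_injOn (s := Finset.Ici i) (t := Finset.Ici (f i)) f
    (fun x hx => Finset.mem_Ici.2 (hf.monotone (Finset.mem_Ici.1 hx))) hf.injective.injOn
  simp only [Fin.card_Ici] at this
  simp only [Fin.le_def, lastCols]
  omega

theorem sum_lastCols_le_sum_of_injective {ν : Fin r → ℝ} (hν : Antitone ν)
    (hf : Function.Injective f) : ∑ i, ν (lastCols r s hsr i) ≤ ∑ i, ν (f i) := by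
  rw [← Equiv.sum_comp (Tuple.sort f) (fun i => ν (f i))]
  exact Finset.sum_le_sum fun i _ => hν (le_lastCols_of_strictMono hsr (Tuple.strictMono_sort hf) i)

end Fin

section HahnSeries

omit [CharZero K]

variable {r s : ℕ}

theorem inR_iff_nonneg_addVal (a : HahnSeries ℝ K) : inR a ↔ 0 ≤ addVal ℝ K a := by
  rw [inR, addVal_apply, zero_le_orderTop_iff, or_iff_right_of_imp]
  rintro rfl
  rw [order_zero]

theorem InGLR.nonneg_addVal {P : Matrix (Fin r) (Fin r) (HahnSeries ℝ K)} (hP : InGLR P)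
    (i j : Fin r) : 0 ≤ addVal ℝ K (P i j) :=
  (inR_iff_nonneg_addVal _).1 (hP.1 i j)

theorem IsInv.exists_eq_mul_Dmat_mul {M : Matrix (Fin r) (Fin r) (HahnSeries ℝ K)}
    {ν : Fin r → ℝ} (h : IsInv M ν) :
    ∃ P Q : Matrix (Fin r) (Fin r) (HahnSeries ℝ K), (∀ i j, 0 ≤ addVal ℝ K (P i j)) ∧
      (∀ i j, 0 ≤ addVal ℝ K (Q i j)) ∧ M = P * Dmat K ν * Q := by
  obtain ⟨-, P, Q, hP, hQ, heq⟩ := h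
  obtain ⟨P', hP', -, hP'P⟩ := hP.2
  obtain ⟨Q', -, -, hQ'Q⟩ := hQ.2
  rw [Matrix.inv_eq_left_inv hQ'Q] at heq
  refine ⟨P', Q, fun i j => (inR_iff_nonneg_addVal _).1 (hP' i j), hQ.nonneg_addVal, ?_⟩
  calc M = P' * P * M * (Q' * Q) := by rw [hP'P, hQ'Q, Matrix.one_mul, Matrix.mul_one]
    _ = P' * (P * M * Q') * Q := by simp only [Matrix.mul_assoc]
    _ = P' * Dmat K ν * Q := by rw [heq]

theorem IsInv.exists_Dmat_eq_mul_mul {M : Matrix (Fin r) (Fin r) (HahnSeries ℝ K)}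
    {ν : Fin r → ℝ} (h : IsInv M ν) :
    ∃ P Q : Matrix (Fin r) (Fin r) (HahnSeries ℝ K), (∀ i j, 0 ≤ addVal ℝ K (P i j)) ∧
      (∀ i j, 0 ≤ addVal ℝ K (Q i j)) ∧ Dmat K ν = P * M * Q := by
  obtain ⟨-, P, Q, hP, hQ, heq⟩ := h
  obtain ⟨Q', hQ', -, hQ'Q⟩ := hQ.2
  rw [Matrix.inv_eq_left_inv hQ'Q] at heq
  exact ⟨P, Q', hP.nonneg_addVal, fun i j => (inR_iff_nonneg_addVal _).1 (hQ' i j), heq.symm⟩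

theorem minorDet_Dmat_mul (μ : Fin r → ℝ) (N : Matrix (Fin r) (Fin r) (HahnSeries ℝ K))
    (C D : Fin s → Fin r) :
    minorDet (Dmat K μ * N) C D = (∏ i, single (μ (C i)) (1 : K)) * minorDet N C D := by
  rw [minorDet, minorDet, ← Matrix.det_diagonal, ← Matrix.det_mul]
  congr 1
  ext i j
  simp [Dmat, Matrix.diagonal_mul]

theorem addVal_minorDet_Dmat_mul (μ : Fin r → ℝ) (N : Matrix (Fin r) (Fin r) (HahnSeries ℝ K))
    (C D : Fin s → Fin r) :
    addVal ℝ K (minorDet (Dmat K μ * N) C D) =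
      ((∑ i, μ (C i) : ℝ) : WithTop ℝ) + addVal ℝ K (minorDet N C D) := by
  rw [minorDet_Dmat_mul, AddValuation.map_mul, AddValuation.map_prod]
  simp [addVal_apply]

theorem minorDet_Dmat_mul_ne_zero_iff {μ : Fin r → ℝ}
    {N : Matrix (Fin r) (Fin r) (HahnSeries ℝ K)} {C D : Fin s → Fin r} :
    minorDet (Dmat K μ * N) C D ≠ 0 ↔ minorDet N C D ≠ 0 := by
  rw [← (addVal ℝ K).ne_top_iff, ← (addVal ℝ K).ne_top_iff, addVal_minorDet_Dmat_mul,
    WithTop.add_ne_top]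
  exact and_iff_right WithTop.coe_ne_top

theorem order_minorDet_Dmat_mul {μ : Fin r → ℝ} {N : Matrix (Fin r) (Fin r) (HahnSeries ℝ K)}
    {C D : Fin s → Fin r} (h : minorDet N C D ≠ 0) :
    (minorDet (Dmat K μ * N) C D).order = ∑ i, μ (C i) + (minorDet N C D).order := by
  have := addVal_minorDet_Dmat_mul μ N C D
  rw [addVal_apply_of_ne (minorDet_Dmat_mul_ne_zero_iff.2 h), addVal_apply_of_ne h] at this
  exact_mod_cast this

theorem addVal_minorDet_Dmat_self (ν : Fin r → ℝ) {L : Fin s → Fin r}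
    (hL : Function.Injective L) :
    addVal ℝ K (minorDet (Dmat K ν) L L) = ((∑ i, ν (L i) : ℝ) : WithTop ℝ) := by
  rw [← Matrix.mul_one (Dmat K ν), addVal_minorDet_Dmat_mul, minorDet,
    Matrix.submatrix_one _ hL, Matrix.det_one, AddValuation.map_one, add_zero]

theorem sum_lastCols_le_addVal_minorDet_Dmat {ν : Fin r → ℝ} (hν : Antitone ν) (hsr : s ≤ r)
    (g h : Fin s → Fin r) :
    ((∑ i, ν (lastCols r s hsr i) : ℝ) : WithTop ℝ) ≤ addVal ℝ K (minorDet (Dmat K ν) g h) := by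
  rw [← Matrix.mul_one (Dmat K ν), addVal_minorDet_Dmat_mul]
  by_cases hg : Function.Injective g
  · refine le_add_of_le_of_nonneg
      (WithTop.coe_le_coe.2 (sum_lastCols_le_sum_of_injective hsr hν hg))
      ((addVal ℝ K).nonneg_map_det fun i j => ?_)
    rw [Matrix.submatrix_apply, Matrix.one_apply]
    split_ifs <;> simp
  · obtain ⟨a, b, hab, hne⟩ := Function.not_injective_iff.1 hg
    have hrows : (1 : Matrix (Fin r) (Fin r) (HahnSeries ℝ K)).submatrix g h a =
        (1 : Matrix (Fin r) (Fin r) (HahnSeries ℝ K)).submatrix g h b :=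
      funext fun j => by rw [Matrix.submatrix_apply, Matrix.submatrix_apply, hab]
    rw [minorDet, Matrix.det_zero_of_row_eq hne hrows, AddValuation.map_zero, WithTop.add_top]
    exact le_top

theorem IsInv.sum_lastCols_le_order_minorDet {M : Matrix (Fin r) (Fin r) (HahnSeries ℝ K)}
    {ν : Fin r → ℝ} (hinv : IsInv M ν) (hsr : s ≤ r) {g h : Fin s → Fin r}
    (hgh : minorDet M g h ≠ 0) : ∑ i, ν (lastCols r s hsr i) ≤ (minorDet M g h).order := by
  obtain ⟨P, Q, hP, hQ, rfl⟩ := hinv.exists_eq_mul_Dmat_mul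
  have := (addVal ℝ K).le_map_det_submatrix_mul_mul hP hQ
    (sum_lastCols_le_addVal_minorDet_Dmat hinv.1 hsr) g h
  rwa [← minorDet, addVal_apply_of_ne hgh, WithTop.coe_le_coe] at this

theorem IsInv.exists_strictMono_addVal_minorDet_le
    {M : Matrix (Fin r) (Fin r) (HahnSeries ℝ K)} {ν : Fin r → ℝ} (hinv : IsInv M ν)
    (hsr : s ≤ r) :
    ∃ C D : Fin s → Fin r, StrictMono C ∧ StrictMono D ∧
      addVal ℝ K (minorDet M C D) ≤ ((∑ i, ν (lastCols r s hsr i) : ℝ) : WithTop ℝ) := by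
  obtain ⟨P, Q, hP, hQ, hD⟩ := hinv.exists_Dmat_eq_mul_mul
  obtain ⟨C, D, hle⟩ := (addVal ℝ K).exists_map_det_submatrix_le_of_mul_mul (X := M) hP hQ
    (lastCols r s hsr) (lastCols r s hsr)
  rw [← hD] at hle
  have hle' : addVal ℝ K (minorDet M C D) ≤ ((∑ i, ν (lastCols r s hsr i) : ℝ) : WithTop ℝ) :=
    hle.trans_eq (addVal_minorDet_Dmat_self ν (lastCols_strictMono hsr).injective)
  have hCD : minorDet M C D ≠ 0 :=
    (addVal ℝ K).ne_top_iff.1 (ne_top_of_le_ne_top WithTop.coe_ne_top hle')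
  obtain ⟨C', D', hC', hD', hval⟩ := (addVal ℝ K).exists_strictMono_map_det_submatrix_eq hCD
  exact ⟨C', D', hC', hD', hval.trans_le hle'⟩

theorem IsInv.order_minorDet_eq_sum_lastCols {M : Matrix (Fin r) (Fin r) (HahnSeries ℝ K)}
    {ν : Fin r → ℝ} (hinv : IsInv M ν) (hsr : s ≤ r) {I J : Fin s → Fin r}
    (hIJ : minorDet M I J ≠ 0)
    (hmin : ∀ C D : Fin s → Fin r, StrictMono C → StrictMono D → minorDet M C D ≠ 0 →
      (minorDet M I J).order ≤ (minorDet M C D).order) :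
    (minorDet M I J).order = ∑ i, ν (lastCols r s hsr i) := by
  obtain ⟨C, D, hC, hD, hle⟩ := hinv.exists_strictMono_addVal_minorDet_le hsr
  have hCD : minorDet M C D ≠ 0 :=
    (addVal ℝ K).ne_top_iff.1 (ne_top_of_le_ne_top WithTop.coe_ne_top hle)
  rw [addVal_apply_of_ne hCD, WithTop.coe_le_coe] at hle
  exact le_antisymm ((hmin C D hC hD hCD).trans hle) (hinv.sum_lastCols_le_order_minorDet hsr hIJ)

namespace MuGeneric

variable {μ : Fin r → ℝ} {N : Matrix (Fin r) (Fin r) (HahnSeries ℝ K)}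

theorem minorDet_ne_zero (hN : MuGeneric μ N) {I J : Fin s → Fin r} (hI : StrictMono I)
    (hJ : StrictMono J) (hIJ : ∀ k, I k ≤ J k) : minorDet N I J ≠ 0 :=
  (hN.2.2 s I I J hI hI hJ (fun _ => le_rfl) hIJ).1

theorem le_of_minorDet_ne_zero (hN : MuGeneric μ N) {C D : Fin s → Fin r} (hC : StrictMono C)
    (hD : StrictMono D) (hCD : minorDet N C D ≠ 0) (k : Fin s) : C k ≤ D k :=
  Matrix.BlockTriangular.le_of_det_submatrix_ne_zero (fun i j h => hN.2.1 i j h) hC.monotone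
    hD.monotone hCD k

theorem order_minorDet_castLE_lastCols_le (hN : MuGeneric μ N) (hsr : s ≤ r)
    {C D : Fin s → Fin r} (hC : StrictMono C) (hD : StrictMono D) (hCD : minorDet N C D ≠ 0) :
    (minorDet N (Fin.castLE hsr) (lastCols r s hsr)).order ≤ (minorDet N C D).order := by
  set E := Fin.castLE hsr
  set L := lastCols r s hsr
  have hE : StrictMono E := Fin.strictMono_castLE hsr
  have hCleD := hN.le_of_minorDet_ne_zero hC hD hCD
  have hEC := castLE_le_of_strictMono hsr hC
  obtain ⟨-, -, -, -, -, hEL_ED⟩ := hN.2.2 s E D L hE hD (lastCols_strictMono hsr)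
    (fun k => (hEC k).trans (hCleD k)) (le_lastCols_of_strictMono hsr hD)
  obtain ⟨-, -, -, hED_CD, -, -⟩ := hN.2.2 s E C D hE hC hD hEC hCleD
  exact hEL_ED.trans hED_CD

theorem order_minorDet_Dmat_mul_lastCols_le (hN : MuGeneric μ N) (hsr : s ≤ r)
    {C D : Fin s → Fin r} (hC : StrictMono C) (hD : StrictMono D)
    (hCD : minorDet (Dmat K μ * N) C D ≠ 0) :
    (minorDet (Dmat K μ * N) (lastCols r s hsr) (lastCols r s hsr)).order ≤
      (minorDet (Dmat K μ * N) C D).order := by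
  set L := lastCols r s hsr
  have hL : StrictMono L := lastCols_strictMono hsr
  have hNCD := minorDet_Dmat_mul_ne_zero_iff.1 hCD
  have hCleD := hN.le_of_minorDet_ne_zero hC hD hNCD
  have hDL := le_lastCols_of_strictMono hsr hD
  obtain ⟨-, -, -, -, hDL_CL, hCL_CD⟩ := hN.2.2 s C D L hC hD hL hCleD hDL
  obtain ⟨-, hLL, -, -, hLL_DL, -⟩ := hN.2.2 s D L L hD hL hL hDL fun _ => le_rfl
  rw [order_minorDet_Dmat_mul hLL, order_minorDet_Dmat_mul hNCD]
  linarith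

end MuGeneric

end HahnSeries

theorem mu_generic_corner_minors_general {r : ℕ} (μ ν lam : Fin r → ℝ)
    (N : Matrix (Fin r) (Fin r) (HahnSeries ℝ K)) (hN : MuGeneric μ N)
    (hinvN : IsInv N ν) (hinvDN : IsInv (Dmat K μ * N) lam) :
    ∀ (s : ℕ) (hs1 : 1 ≤ s) (hsr : s ≤ r),
      (minorDet N (fun i : Fin s => Fin.castLE hsr i) (lastCols r s hsr)).order
          = (∑ i : Fin s, ν (lastCols r s hsr i)) ∧
      (minorDet (Dmat K μ * N) (lastCols r s hsr) (lastCols r s hsr)).order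
          = ∑ i : Fin s, lam (lastCols r s hsr i) := by
  intro s _ hsr
  have hL := lastCols_strictMono hsr
  refine ⟨hinvN.order_minorDet_eq_sum_lastCols hsr ?_ fun C D hC hD =>
      hN.order_minorDet_castLE_lastCols_le hsr hC hD,
    hinvDN.order_minorDet_eq_sum_lastCols hsr ?_ fun C D hC hD =>
      hN.order_minorDet_Dmat_mul_lastCols_le hsr hC hD⟩
  · exact hN.minorDet_ne_zero (Fin.strictMono_castLE hsr) hL (castLE_le_of_strictMono hsr hL)
  · exact minorDet_Dmat_mul_ne_zero_iff.2 (hN.minorDet_ne_zero hL hL fun _ => le_rfl)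

/-- For a `μ`-generic `N*` with `inv(N*) = ν` and `inv(D_μ N*) = λ`,
the minor of `N*` on rows `(1, …, s)` and columns `(r−s+1, …, r)` has order
`ν_{r−s+1} + ⋯ + ν_r`, and the minor of `D_μ N*` on rows and columns `(r−s+1, …, r)` has
order `λ_{r−s+1} + ⋯ + λ_r`. -/
theorem mu_generic_corner_minors {r : ℕ} (μ ν lam : Fin r → ℝ) (hμ : Antitone μ)
    (N : Matrix (Fin r) (Fin r) (HahnSeries ℝ K)) (hN : MuGeneric μ N)
    (hinvN : IsInv N ν) (hinvDN : IsInv (Dmat K μ * N) lam) :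
    ∀ (s : ℕ) (hs1 : 1 ≤ s) (hsr : s ≤ r),
      (minorDet N (fun i : Fin s => Fin.castLE hsr i) (lastCols r s hsr)).order
          = (∑ i : Fin s, ν (lastCols r s hsr i)) ∧
      (minorDet (Dmat K μ * N) (lastCols r s hsr) (lastCols r s hsr)).order
          = ∑ i : Fin s, lam (lastCols r s hsr i) :=
  mu_generic_corner_minors_general μ ν lam N hN hinvN hinvDN

end
end
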